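/- (Theorem 3.1.12, part (3.1.21)) Let a < b be real numbers, let f : [a,b] → ℝ be gauge integrable over [a,b], and let F : [a,b] → ℝ be its indefinite integral, F(x) = gauge integral of f over [a,x] (with F(a) = 0). Then |f| is gauge integrable over [a,b] if and only if F is of bounded variation over [a,b], i.e., the supremum over all partitions a = u₀ < u₁ < ⋯ < uₙ = b of Σⱼ |F(uⱼ) − F(u_{j−1})| is finite; and in that case the gauge integral of |f| over [a,b] equals the total variation of F on [a,b]. -/

import Mathlib

/-- A tagged division of `[a, b]`: points `a = u 0 < u 1 < ⋯ < u n = b`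
together with tags `t j ∈ [u j, u (j+1)]` for `j = 0, …, n-1`. -/
structure TaggedDiv (a b : ℝ) where
  n : ℕ
  u : ℕ → ℝ
  t : ℕ → ℝ
  n_pos : 0 < n
  left : u 0 = a
  right : u n = b
  mono : ∀ j < n, u j < u (j + 1)
  tag_mem : ∀ j < n, t j ∈ Set.Icc (u j) (u (j + 1))

/-- A tagged division is `δ`-fine if each interval `[u j, u (j+1)]` is contained in
`(t j - δ (t j), t j + δ (t j))`. -/
def TaggedDiv.IsFine {a b : ℝ} (δ : ℝ → ℝ) (D : TaggedDiv a b) : Prop :=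
  ∀ j < D.n,
    Set.Icc (D.u j) (D.u (j + 1)) ⊆ Set.Ioo (D.t j - δ (D.t j)) (D.t j + δ (D.t j))

/-- The Riemann sum of `f` over a tagged division. -/
noncomputable def TaggedDiv.riemannSum {a b : ℝ} (D : TaggedDiv a b) (f : ℝ → ℝ) : ℝ :=
  ∑ j ∈ Finset.range D.n, f (D.t j) * (D.u (j + 1) - D.u j)

/-- A gauge on `[a, b]`: a function positive at each point of `[a, b]`. -/
def IsGauge (a b : ℝ) (δ : ℝ → ℝ) : Prop :=
  ∀ x ∈ Set.Icc a b, 0 < δ x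

/-- `F` is the gauge (Henstock–Kurzweil) integral of `f` over `[a, b]`. -/
def HKIntegral (a b : ℝ) (f : ℝ → ℝ) (F : ℝ) : Prop :=
  ∀ ε > 0, ∃ δ : ℝ → ℝ, IsGauge a b δ ∧
    ∀ D : TaggedDiv a b, D.IsFine δ → |D.riemannSum f - F| < ε

/-- The set of all sums `Σⱼ |F (u (j+1)) - F (u j)|` over partitions
`a = u 0 < u 1 < ⋯ < u n = b` of `[a,b]`. -/
def partitionVarSums (F : ℝ → ℝ) (a b : ℝ) : Set ℝ :=
  { v : ℝ | ∃ (n : ℕ) (u : ℕ → ℝ), 0 < n ∧ u 0 = a ∧ u n = b ∧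
      (∀ j < n, u j < u (j + 1)) ∧
      v = ∑ j ∈ Finset.range n, |F (u (j + 1)) - F (u j)| }

/-! Helpers -/

lemma chain_le {p : ℕ → ℝ} {m : ℕ} (h : ∀ j < m, p j ≤ p (j+1)) :
    ∀ i k, i ≤ k → k ≤ m → p i ≤ p k := by
  intro i k hik hkm
  induction k with
  | zero => simp_all
  | succ k ih =>
    rcases Nat.lt_or_ge i (k+1) with h1 | h1
    · exact le_trans (ih (Nat.lt_succ_iff.mp h1) (le_trans (Nat.le_succ k) hkm))
        (h k (Nat.lt_of_lt_of_le (Nat.lt_succ_self k) hkm))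
    · have : i = k+1 := le_antisymm hik h1
      simp [this]

lemma chain_lt {p : ℕ → ℝ} {m : ℕ} (h : ∀ j < m, p j < p (j+1)) :
    ∀ i k, i < k → k ≤ m → p i < p k := by
  intro i k hik hkm
  induction k with
  | zero => omega
  | succ k ih =>
    rcases Nat.lt_or_ge i k with h1 | h1
    · exact lt_trans (ih h1 (le_trans (Nat.le_succ k) hkm)) (h k (by omega))
    · have : i = k := by omega
      subst this
      exact h i (by omega)

namespace TaggedDiv

variable {a b : ℝ}

lemma u_mono (D : TaggedDiv a b) : ∀ i k, i ≤ k → k ≤ D.n → D.u i ≤ D.u k :=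
  chain_le (fun j hj => (D.mono j hj).le)

lemma u_lt (D : TaggedDiv a b) : ∀ i k, i < k → k ≤ D.n → D.u i < D.u k :=
  chain_lt D.mono

lemma a_lt_b (D : TaggedDiv a b) : a < b := by
  have := D.u_lt 0 D.n D.n_pos le_rfl
  rwa [D.left, D.right] at this


lemma u_mem (D : TaggedDiv a b) {j : ℕ} (hj : j ≤ D.n) : D.u j ∈ Set.Icc a b := by
  constructor
  · have h := D.u_mono 0 j (Nat.zero_le j) hj
    rwa [D.left] at h
  · have h := D.u_mono j D.n hj le_rfl
    rwa [D.right] at h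

lemma t_mem (D : TaggedDiv a b) {j : ℕ} (hj : j < D.n) : D.t j ∈ Set.Icc a b := by
  obtain ⟨h1, h2⟩ := D.tag_mem j hj
  exact ⟨le_trans (D.u_mem (le_of_lt hj)).1 h1, le_trans h2 (D.u_mem hj).2⟩

/-- single-interval tagged division -/
def single (a b : ℝ) (h : a < b) (x : ℝ) (hx : x ∈ Set.Icc a b) : TaggedDiv a b where
  n := 1
  u := fun j => if j = 0 then a else b
  t := fun _ => x
  n_pos := one_pos
  left := rfl
  right := rfl
  mono := by intro j hj; interval_cases j; simpa using h
  tag_mem := by intro j hj; interval_cases j; simpa using hx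

@[simp] lemma single_sum (a b : ℝ) (h : a < b) (x : ℝ) (hx : x ∈ Set.Icc a b) (f : ℝ → ℝ) :
    (single a b h x hx).riemannSum f = f x * (b - a) := by
  simp [riemannSum, single]

lemma single_fine (a b : ℝ) (h : a < b) (x : ℝ) (hx : x ∈ Set.Icc a b) {δ : ℝ → ℝ}
    (hδ : Set.Icc a b ⊆ Set.Ioo (x - δ x) (x + δ x)) : (single a b h x hx).IsFine δ := by
  intro j hj
  simp only [single] at hj ⊢
  interval_cases j
  simpa using hδ

/-- points of the concatenation -/
noncomputable def concatU {c : ℝ} (D1 : TaggedDiv a c) (D2 : TaggedDiv c b) : ℕ → ℝ :=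
  fun j => if j ≤ D1.n then D1.u j else D2.u (j - D1.n)

noncomputable def concatT {c : ℝ} (D1 : TaggedDiv a c) (D2 : TaggedDiv c b) : ℕ → ℝ :=
  fun j => if j < D1.n then D1.t j else D2.t (j - D1.n)

lemma concatU_left {c : ℝ} (D1 : TaggedDiv a c) (D2 : TaggedDiv c b) {j : ℕ} (h : j ≤ D1.n) :
    concatU D1 D2 j = D1.u j := if_pos h

lemma concatU_right {c : ℝ} (D1 : TaggedDiv a c) (D2 : TaggedDiv c b) {j : ℕ} (h : D1.n ≤ j) :
    concatU D1 D2 j = D2.u (j - D1.n) := by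
  rcases Nat.eq_or_lt_of_le h with he | hl
  · show (if j ≤ D1.n then D1.u j else _) = _
    rw [if_pos (le_of_eq he.symm), ← he, Nat.sub_self, D1.right, D2.left]
  · show (if j ≤ D1.n then D1.u j else _) = _
    rw [if_neg (by omega)]

lemma concatT_left {c : ℝ} (D1 : TaggedDiv a c) (D2 : TaggedDiv c b) {j : ℕ} (h : j < D1.n) :
    concatT D1 D2 j = D1.t j := if_pos h

lemma concatT_right {c : ℝ} (D1 : TaggedDiv a c) (D2 : TaggedDiv c b) {j : ℕ} (h : D1.n ≤ j) :
    concatT D1 D2 j = D2.t (j - D1.n) := if_neg (by omega)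

/-- concatenation -/
noncomputable def concat {c : ℝ} (D1 : TaggedDiv a c) (D2 : TaggedDiv c b) : TaggedDiv a b where
  n := D1.n + D2.n
  u := concatU D1 D2
  t := concatT D1 D2
  n_pos := Nat.add_pos_left D1.n_pos _
  left := by rw [concatU_left D1 D2 (Nat.zero_le _), D1.left]
  right := by
    rw [concatU_right D1 D2 (by omega), Nat.add_sub_cancel_left, D2.right]
  mono := by
    intro j hj
    rcases Nat.lt_or_ge j D1.n with h | h
    · rw [concatU_left D1 D2 (le_of_lt h), concatU_left D1 D2 (by omega)]
      exact D1.mono j h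
    · rw [concatU_right D1 D2 h, concatU_right D1 D2 (by omega),
        (by omega : j + 1 - D1.n = (j - D1.n) + 1)]
      exact D2.mono (j - D1.n) (by omega)
  tag_mem := by
    intro j hj
    rcases Nat.lt_or_ge j D1.n with h | h
    · rw [concatU_left D1 D2 (le_of_lt h), concatU_left D1 D2 (by omega),
        concatT_left D1 D2 h]
      exact D1.tag_mem j h
    · rw [concatU_right D1 D2 h, concatU_right D1 D2 (by omega),
        concatT_right D1 D2 h, (by omega : j + 1 - D1.n = (j - D1.n) + 1)]
      exact D2.tag_mem (j - D1.n) (by omega)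

lemma concat_sum {c : ℝ} (D1 : TaggedDiv a c) (D2 : TaggedDiv c b) (f : ℝ → ℝ) :
    (D1.concat D2).riemannSum f = D1.riemannSum f + D2.riemannSum f := by
  unfold riemannSum
  show (∑ j ∈ Finset.range (D1.n + D2.n),
      f (concatT D1 D2 j) * (concatU D1 D2 (j+1) - concatU D1 D2 j)) = _
  rw [Finset.sum_range_add]
  congr 1
  · apply Finset.sum_congr rfl
    intro j hj
    simp only [Finset.mem_range] at hj
    rw [concatT_left D1 D2 hj, concatU_left D1 D2 (by omega), concatU_left D1 D2 (by omega)]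
  · apply Finset.sum_congr rfl
    intro j hj
    simp only [Finset.mem_range] at hj
    rw [concatT_right D1 D2 (by omega), concatU_right D1 D2 (by omega),
      concatU_right D1 D2 (by omega), (by omega : D1.n + j - D1.n = j),
      (by omega : D1.n + j + 1 - D1.n = j + 1)]

lemma concat_fine {c : ℝ} {D1 : TaggedDiv a c} {D2 : TaggedDiv c b} {δ : ℝ → ℝ}
    (h1 : D1.IsFine δ) (h2 : D2.IsFine δ) : (D1.concat D2).IsFine δ := by
  intro j hj
  have hn : j < D1.n + D2.n := hj
  show Set.Icc (concatU D1 D2 j) (concatU D1 D2 (j+1)) ⊆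
    Set.Ioo (concatT D1 D2 j - δ (concatT D1 D2 j)) (concatT D1 D2 j + δ (concatT D1 D2 j))
  rcases Nat.lt_or_ge j D1.n with h | h
  · rw [concatT_left D1 D2 h, concatU_left D1 D2 (le_of_lt h), concatU_left D1 D2 (by omega)]
    exact h1 j h
  · rw [concatT_right D1 D2 h, concatU_right D1 D2 h, concatU_right D1 D2 (by omega),
      (by omega : j + 1 - D1.n = (j - D1.n) + 1)]
    exact h2 (j - D1.n) (by omega)

end TaggedDiv

open TaggedDiv
section

namespace TaggedDiv

def castRight {a b b' : ℝ} (h : b = b') (D : TaggedDiv a b) : TaggedDiv a b' := h ▸ D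

def castLeft {a a' b : ℝ} (h : a = a') (D : TaggedDiv a b) : TaggedDiv a' b := h ▸ D

lemma castRight_fine {a b b' : ℝ} (h : b = b') (D : TaggedDiv a b) (δ : ℝ → ℝ)
    (hD : D.IsFine δ) : (castRight h D).IsFine δ := by subst h; exact hD

lemma castRight_sum {a b b' : ℝ} (h : b = b') (D : TaggedDiv a b) (f : ℝ → ℝ) :
    (castRight h D).riemannSum f = D.riemannSum f := by subst h; rfl

lemma castLeft_fine {a a' b : ℝ} (h : a = a') (D : TaggedDiv a b) (δ : ℝ → ℝ)
    (hD : D.IsFine δ) : (castLeft h D).IsFine δ := by subst h; exact hD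

lemma castLeft_sum {a a' b : ℝ} (h : a = a') (D : TaggedDiv a b) (f : ℝ → ℝ) :
    (castLeft h D).riemannSum f = D.riemannSum f := by subst h; rfl

end TaggedDiv

/-- Cousin's lemma: fine divisions exist. -/
lemma cousin (a b : ℝ) (hab : a < b) (δ : ℝ → ℝ) (hδ : IsGauge a b δ) :
    ∃ D : TaggedDiv a b, D.IsFine δ := by
  set S : Set ℝ := {x | x ∈ Set.Ioc a b ∧ ∃ D : TaggedDiv a x, D.IsFine δ} with hS
  have hδa : 0 < δ a := hδ a ⟨le_rfl, le_of_lt hab⟩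
  have hne : S.Nonempty := by
    have hlt : a < min b (a + δ a / 2) := lt_min hab (by linarith)
    refine ⟨min b (a + δ a / 2), ⟨⟨hlt, min_le_left _ _⟩, ?_⟩⟩
    refine ⟨single a _ hlt a ⟨le_rfl, le_of_lt hlt⟩, ?_⟩
    apply single_fine
    intro y hy
    refine ⟨by have := hy.1; linarith, ?_⟩
    have h2 : y ≤ a + δ a / 2 := le_trans hy.2 (min_le_right _ _)
    linarith
  have hbdd : BddAbove S := ⟨b, fun x hx => hx.1.2⟩
  set c := sSup S with hc
  have hcb : c ≤ b := csSup_le hne (fun x hx => hx.1.2)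
  obtain ⟨x0, hx0⟩ := id hne
  have hac : a < c := lt_of_lt_of_le hx0.1.1 (le_csSup hbdd hx0)
  have hδc : 0 < δ c := hδ c ⟨le_of_lt hac, hcb⟩
  -- c ∈ S
  have hcS : ∃ D : TaggedDiv a c, D.IsFine δ := by
    set ε := min (δ c) (c - a) with hε
    have hεpos : 0 < ε := lt_min hδc (by linarith)
    obtain ⟨x, hxS, hxgt⟩ := exists_lt_of_lt_csSup hne (by linarith : c - ε < c)
    have hxc : x ≤ c := le_csSup hbdd hxS
    rcases eq_or_lt_of_le hxc with he | hl
    · exact he ▸ hxS.2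
    · obtain ⟨Dx, hDx⟩ := hxS.2
      have hsub : Set.Icc x c ⊆ Set.Ioo (c - δ c) (c + δ c) := by
        intro y hy
        constructor
        · have : c - ε < x := hxgt
          have : ε ≤ δ c := min_le_left _ _
          have := hy.1
          linarith
        · have := hy.2; linarith
      refine ⟨Dx.concat (single x c hl c ⟨le_of_lt hl, le_rfl⟩), concat_fine hDx ?_⟩
      exact single_fine _ _ _ _ _ hsub
  obtain ⟨Dc, hDc⟩ := hcS
  rcases eq_or_lt_of_le hcb with he | hl
  · exact ⟨castRight he Dc, castRight_fine he Dc δ hDc⟩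
  · exfalso
    set y := min b (c + δ c / 2) with hy
    have hcy : c < y := lt_min hl (by linarith)
    have hsub : Set.Icc c y ⊆ Set.Ioo (c - δ c) (c + δ c) := by
      intro z hz
      refine ⟨by have := hz.1; linarith, ?_⟩
      have : z ≤ c + δ c / 2 := le_trans hz.2 (min_le_right _ _)
      linarith
    have hyS : y ∈ S := by
      refine ⟨⟨lt_trans hac hcy, min_le_left _ _⟩,
        ⟨Dc.concat (single c y hcy c ⟨le_rfl, le_of_lt hcy⟩), concat_fine hDc ?_⟩⟩
      exact single_fine _ _ _ _ _ hsub
    exact absurd (le_csSup hbdd hyS) (not_le.mpr hcy)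



/-- Gluing fine divisions along a chain, allowing degenerate pieces. -/
lemma glue (f δ : ℝ → ℝ) :
    ∀ (m : ℕ) (p : ℕ → ℝ) (S : ℕ → ℝ), (∀ j < m, p j ≤ p (j+1)) → p 0 < p m →
    (∀ j < m, (p j = p (j+1) ∧ S j = 0) ∨
      ∃ Dj : TaggedDiv (p j) (p (j+1)), Dj.IsFine δ ∧ Dj.riemannSum f = S j) →
    ∃ D : TaggedDiv (p 0) (p m), D.IsFine δ ∧
      D.riemannSum f = ∑ j ∈ Finset.range m, S j := by
  intro m
  induction m with
  | zero => intro p S _ h2 _; exact absurd h2 (lt_irrefl _)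
  | succ m ih =>
    intro p S h1 h2 h3
    rcases h3 m (by omega) with ⟨hdeg, hS0⟩ | ⟨Dm, hDm, hSm⟩
    · have hlt : p 0 < p m := by rwa [← hdeg] at h2
      obtain ⟨D, hD, hsum⟩ := ih p S (fun j hj => h1 j (by omega)) hlt
        (fun j hj => h3 j (by omega))
      refine ⟨castRight hdeg D, castRight_fine hdeg D δ hD, ?_⟩
      rw [castRight_sum, hsum, Finset.sum_range_succ, hS0, add_zero]
    · rcases eq_or_lt_of_le (chain_le (fun j hj => h1 j hj) 0 m (Nat.zero_le m) (by omega)) with he | hl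
      · have hallzero : ∀ j < m, S j = 0 := by
          intro j hj
          have hpj : p j = p (j+1) := by
            have e1 : p 0 ≤ p j := chain_le (fun i hi => h1 i hi) 0 j (Nat.zero_le j) (by omega)
            have e2 : p (j+1) ≤ p m := chain_le (fun i hi => h1 i hi) (j+1) m (by omega) (by omega)
            have e3 : p j ≤ p (j+1) := h1 j (by omega)
            rw [← he] at e2
            linarith
          rcases h3 j (by omega) with ⟨_, h⟩ | ⟨Dj, _, _⟩
          · exact h
          · exact absurd (hpj ▸ Dj.a_lt_b) (lt_irrefl _)
        refine ⟨castLeft he.symm Dm, castLeft_fine he.symm Dm δ hDm, ?_⟩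
        rw [castLeft_sum, Finset.sum_range_succ, hSm]
        have : (∑ j ∈ Finset.range m, S j) = 0 :=
          Finset.sum_eq_zero (fun j hj => hallzero j (Finset.mem_range.mp hj))
        rw [this, zero_add]
      · obtain ⟨D, hD, hsum⟩ := ih p S (fun j hj => h1 j (by omega)) hl
          (fun j hj => h3 j (by omega))
        refine ⟨D.concat Dm, concat_fine hD hDm, ?_⟩
        rw [concat_sum, hsum, hSm, Finset.sum_range_succ]

/-- riemann sum triangle inequality -/
lemma abs_riemannSum_le {a b : ℝ} (D : TaggedDiv a b) (f : ℝ → ℝ) :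
    |D.riemannSum f| ≤ D.riemannSum (fun x => |f x|) := by
  unfold TaggedDiv.riemannSum
  refine le_trans (Finset.abs_sum_le_sum_abs _ _) (Finset.sum_le_sum ?_)
  intro j hj
  simp only [Finset.mem_range] at hj
  rw [abs_mul, abs_of_nonneg (by have := D.mono j hj; linarith : (0:ℝ) ≤ D.u (j+1) - D.u j)]

end
/-- The integral of `f` over a subinterval `[u,v]` is `F v - F u`. -/
lemma hk_sub {a b : ℝ} (hab : a < b) (f F : ℝ → ℝ) (hFa : F a = 0)
    (hF : ∀ x : ℝ, a < x → x ≤ b → HKIntegral a x f (F x)) :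
    ∀ u v : ℝ, a ≤ u → u < v → v ≤ b → HKIntegral u v f (F v - F u) := by
  intro u v hau huv hvb
  rcases eq_or_lt_of_le hau with he | hlt
  · subst he
    rw [hFa, sub_zero]
    exact hF v huv hvb
  · intro ε hε
    obtain ⟨δ1, hδ1, hB1⟩ := hF v (lt_trans hlt huv) hvb (ε/2) (by linarith)
    obtain ⟨δ2, hδ2, hB2⟩ := hF u hlt (le_of_lt (lt_of_lt_of_le huv hvb)) (ε/2) (by linarith)
    have hgauge' : IsGauge a u (fun x => min (δ1 x) (δ2 x)) := by
      intro x hx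
      exact lt_min (hδ1 x ⟨hx.1, le_trans hx.2 (le_of_lt huv)⟩) (hδ2 x hx)
    obtain ⟨D0, hD0⟩ := cousin a u hlt _ hgauge'
    have hD0fine1 : D0.IsFine δ1 := by
      intro j hj x hx
      obtain ⟨l, r⟩ := hD0 j hj hx
      exact ⟨by have := min_le_left (δ1 (D0.t j)) (δ2 (D0.t j)); linarith,
        by have := min_le_left (δ1 (D0.t j)) (δ2 (D0.t j)); linarith⟩
    have hD0fine2 : D0.IsFine δ2 := by
      intro j hj x hx
      obtain ⟨l, r⟩ := hD0 j hj hx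
      exact ⟨by have := min_le_right (δ1 (D0.t j)) (δ2 (D0.t j)); linarith,
        by have := min_le_right (δ1 (D0.t j)) (δ2 (D0.t j)); linarith⟩
    refine ⟨δ1, fun x hx => hδ1 x ⟨le_trans hau hx.1, hx.2⟩, ?_⟩
    intro D hD
    have hcat : (D0.concat D).IsFine δ1 := TaggedDiv.concat_fine hD0fine1 hD
    have h1 := hB1 (D0.concat D) hcat
    have h2 := hB2 D0 hD0fine2
    rw [TaggedDiv.concat_sum] at h1
    calc |D.riemannSum f - (F v - F u)|
        = |(D0.riemannSum f + D.riemannSum f - F v) - (D0.riemannSum f - F u)| := by ring_nf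
      _ ≤ |D0.riemannSum f + D.riemannSum f - F v| + |D0.riemannSum f - F u| := abs_sub _ _
      _ < ε/2 + ε/2 := add_lt_add h1 h2
      _ = ε := by ring

/-- Henstock's lemma (for full systems with possibly degenerate pieces). -/
lemma henstock {a b : ℝ} (hab : a < b) (f F : ℝ → ℝ) (hFa : F a = 0)
    (hF : ∀ x : ℝ, a < x → x ≤ b → HKIntegral a x f (F x))
    (δ : ℝ → ℝ) (hδ : IsGauge a b δ) (ε : ℝ) (hε : 0 ≤ ε)
    (hbound : ∀ D : TaggedDiv a b, D.IsFine δ → |D.riemannSum f - F b| ≤ ε)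
    (m : ℕ) (p τ : ℕ → ℝ) (hp0 : p 0 = a) (hpm : p m = b)
    (hmono : ∀ j < m, p j ≤ p (j+1))
    (htag : ∀ j < m, τ j ∈ Set.Icc (p j) (p (j+1)))
    (hfine : ∀ j < m, Set.Icc (p j) (p (j+1)) ⊆ Set.Ioo (τ j - δ (τ j)) (τ j + δ (τ j))) :
    (∑ j ∈ Finset.range m, |f (τ j) * (p (j+1) - p j) - (F (p (j+1)) - F (p j))|) ≤ 2 * ε := by
  classical
  set e : ℕ → ℝ := fun j => f (τ j) * (p (j+1) - p j) - (F (p (j+1)) - F (p j)) with he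
  have key : ∀ s : Finset ℕ, s ⊆ Finset.range m → |∑ j ∈ s, e j| ≤ ε := by
    intro s hs
    have hkey : ∀ η : ℝ, 0 < η → |∑ j ∈ s, e j| ≤ ε + m * η := by
      intro η hη
      have hex : ∀ j : ℕ, ∃ Sj : ℝ, (j < m →
          ((p j = p (j+1) ∧ Sj = 0) ∨
            ∃ Dj : TaggedDiv (p j) (p (j+1)), Dj.IsFine δ ∧ Dj.riemannSum f = Sj) ∧
          (j ∈ s → Sj = f (τ j) * (p (j+1) - p j)) ∧
          (j ∉ s → |Sj - (F (p (j+1)) - F (p j))| ≤ η)) := by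
        intro j
        by_cases hj : j < m
        · have hsub1 : a ≤ p j := by
            rw [← hp0]; exact chain_le hmono 0 j (Nat.zero_le j) (by omega)
          have hsub2 : p (j+1) ≤ b := by
            rw [← hpm]; exact chain_le hmono (j+1) m (by omega) (by omega)
          by_cases hd : p j = p (j+1)
          · refine ⟨0, fun _ => ⟨Or.inl ⟨hd, rfl⟩, fun _ => ?_, fun _ => ?_⟩⟩
            · rw [← hd, sub_self, mul_zero]
            · rw [← hd]; simp [abs_of_nonneg, le_of_lt hη]
          · have hlt : p j < p (j+1) := lt_of_le_of_ne (hmono j hj) hd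
            by_cases hjs : j ∈ s
            · refine ⟨f (τ j) * (p (j+1) - p j), fun _ => ⟨Or.inr ?_, fun _ => rfl,
                fun hns => absurd hjs hns⟩⟩
              exact ⟨TaggedDiv.single _ _ hlt (τ j) (htag j hj),
                TaggedDiv.single_fine _ _ _ _ _ (hfine j hj),
                TaggedDiv.single_sum _ _ _ _ _ f⟩
            · obtain ⟨δj, hδj, hBj⟩ :=
                hk_sub hab f F hFa hF (p j) (p (j+1)) hsub1 hlt hsub2 η hη
              have hg : IsGauge (p j) (p (j+1)) (fun x => min (δ x) (δj x)) := by
                intro x hx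
                exact lt_min (hδ x ⟨le_trans hsub1 hx.1, le_trans hx.2 hsub2⟩) (hδj x hx)
              obtain ⟨Dj, hDj⟩ := cousin _ _ hlt _ hg
              have hfine1 : Dj.IsFine δ := by
                intro k hk x hx
                obtain ⟨l, r⟩ := hDj k hk hx
                exact ⟨by have := min_le_left (δ (Dj.t k)) (δj (Dj.t k)); linarith,
                  by have := min_le_left (δ (Dj.t k)) (δj (Dj.t k)); linarith⟩
              have hfine2 : Dj.IsFine δj := by
                intro k hk x hx
                obtain ⟨l, r⟩ := hDj k hk hx
                exact ⟨by have := min_le_right (δ (Dj.t k)) (δj (Dj.t k)); linarith,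
                  by have := min_le_right (δ (Dj.t k)) (δj (Dj.t k)); linarith⟩
              exact ⟨Dj.riemannSum f, fun _ => ⟨Or.inr ⟨Dj, hfine1, rfl⟩,
                fun hjs' => absurd hjs' hjs, fun _ => le_of_lt (hBj Dj hfine2)⟩⟩
        · exact ⟨0, fun h => absurd h hj⟩
      choose Sf hSf using hex
      have hp0m : p 0 < p m := by rw [hp0, hpm]; exact hab
      obtain ⟨D0, hD0fine, hD0sum⟩ := glue f δ m p Sf hmono hp0m (fun j hj => (hSf j hj).1)
      set D : TaggedDiv a b := TaggedDiv.castRight hpm (TaggedDiv.castLeft hp0 D0) with hD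
      have hDfine : D.IsFine δ :=
        TaggedDiv.castRight_fine _ _ _ (TaggedDiv.castLeft_fine _ _ _ hD0fine)
      have hDsum : D.riemannSum f = ∑ j ∈ Finset.range m, Sf j := by
        rw [hD, TaggedDiv.castRight_sum, TaggedDiv.castLeft_sum, hD0sum]
      have htel : (∑ j ∈ Finset.range m, (F (p (j+1)) - F (p j))) = F b := by
        rw [Finset.sum_range_sub (fun j => F (p j)), hp0, hpm, hFa, sub_zero]
      have hse : (∑ j ∈ s, e j) = ∑ j ∈ s, (Sf j - (F (p (j+1)) - F (p j))) := by
        apply Finset.sum_congr rfl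
        intro j hj
        have hjm : j < m := Finset.mem_range.mp (hs hj)
        rw [he]
        simp only
        rw [(hSf j hjm).2.1 hj]
      have hsplit : (∑ j ∈ s, e j) =
          (∑ j ∈ Finset.range m, (Sf j - (F (p (j+1)) - F (p j))))
          - (∑ j ∈ Finset.range m \ s, (Sf j - (F (p (j+1)) - F (p j)))) := by
        rw [hse, eq_sub_iff_add_eq, add_comm, Finset.sum_sdiff hs]
      have h1 : (∑ j ∈ Finset.range m, (Sf j - (F (p (j+1)) - F (p j)))) =
          D.riemannSum f - F b := by
        rw [Finset.sum_sub_distrib, htel, hDsum]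
      have h2 : |∑ j ∈ Finset.range m \ s, (Sf j - (F (p (j+1)) - F (p j)))| ≤ m * η := by
        refine le_trans (Finset.abs_sum_le_sum_abs _ _) ?_
        calc (∑ j ∈ Finset.range m \ s, |Sf j - (F (p (j+1)) - F (p j))|)
            ≤ ∑ _j ∈ Finset.range m \ s, η := by
              refine Finset.sum_le_sum ?_
              intro j hj
              obtain ⟨hjm, hjs⟩ := Finset.mem_sdiff.mp hj
              exact (hSf j (Finset.mem_range.mp hjm)).2.2 hjs
          _ = (Finset.range m \ s).card * η := by rw [Finset.sum_const, nsmul_eq_mul]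
          _ ≤ m * η := by
              apply mul_le_mul_of_nonneg_right _ (le_of_lt hη)
              have : (Finset.range m \ s).card ≤ (Finset.range m).card :=
                Finset.card_le_card (Finset.sdiff_subset)
              rw [Finset.card_range] at this
              exact_mod_cast this
      rw [hsplit, h1]
      calc |D.riemannSum f - F b - ∑ j ∈ Finset.range m \ s, (Sf j - (F (p (j+1)) - F (p j)))|
          ≤ |D.riemannSum f - F b| + |∑ j ∈ Finset.range m \ s, (Sf j - (F (p (j+1)) - F (p j)))| :=
            abs_sub _ _
        _ ≤ ε + m * η := add_le_add (hbound D hDfine) h2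
    -- pass to the limit η → 0
    refine le_of_forall_pos_le_add ?_
    intro η' hη'
    have := hkey (η' / (m+1)) (by positivity)
    have hm : (m : ℝ) * (η' / (m+1)) ≤ η' := by
      rw [div_eq_inv_mul, ← mul_assoc]
      rw [mul_comm (m:ℝ) _]
      have h1 : (m:ℝ) ≤ m + 1 := by linarith
      have h2 : (0:ℝ) < m + 1 := by positivity
      calc ((m:ℝ)+1)⁻¹ * m * η' ≤ ((m:ℝ)+1)⁻¹ * (m+1) * η' := by
            apply mul_le_mul_of_nonneg_right _ (le_of_lt hη')
            exact mul_le_mul_of_nonneg_left h1 (by positivity)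
        _ = η' := by field_simp
    linarith
  -- combine positive and negative parts
  set P := (Finset.range m).filter (fun j => 0 ≤ e j) with hP
  have hsplit : (∑ j ∈ Finset.range m, |e j|) =
      (∑ j ∈ P, e j) - (∑ j ∈ Finset.range m \ P, e j) := by
    rw [← Finset.sum_sdiff (Finset.filter_subset (fun j => 0 ≤ e j) (Finset.range m))]
    rw [sub_eq_add_neg, ← Finset.sum_neg_distrib, add_comm]
    congr 1
    · apply Finset.sum_congr rfl
      intro j hj
      exact abs_of_nonneg (Finset.mem_filter.mp hj).2
    · apply Finset.sum_congr rfl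
      intro j hj
      obtain ⟨hjm, hjs⟩ := Finset.mem_sdiff.mp hj
      have : ¬ (0 ≤ e j) := by
        intro hc
        exact hjs (Finset.mem_filter.mpr ⟨hjm, hc⟩)
      exact abs_of_neg (not_le.mp this)
  rw [hsplit]
  have k1 := key P (Finset.filter_subset (fun j => 0 ≤ e j) (Finset.range m))
  have k2 := key (Finset.range m \ P) (Finset.sdiff_subset)
  have a1 : (∑ j ∈ P, e j) ≤ ε := le_trans (le_abs_self _) k1
  have a2 : -(∑ j ∈ Finset.range m \ P, e j) ≤ ε := le_trans (neg_le_abs _) k2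
  linarith
/-- pairing a sum over `range (2*n)` -/
lemma sum_pair (n : ℕ) (g : ℕ → ℝ) :
    (∑ k ∈ Finset.range (2*n), g k) = ∑ j ∈ Finset.range n, (g (2*j) + g (2*j+1)) := by
  induction n with
  | zero => simp
  | succ n ih =>
    have h2 : 2*(n+1) = (2*n) + 1 + 1 := by ring
    rw [h2, Finset.sum_range_succ, Finset.sum_range_succ, ih, Finset.sum_range_succ,
      add_assoc]

/-- telescoping triangle inequality -/
lemma abs_telescope (F : ℝ → ℝ) (p : ℕ → ℝ) :
    ∀ i k : ℕ, i ≤ k →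
      |F (p k) - F (p i)| ≤ ∑ j ∈ Finset.Ico i k, |F (p (j+1)) - F (p j)| := by
  intro i k hik
  induction k, hik using Nat.le_induction with
  | base => simp
  | succ k hik ih =>
    rw [Finset.sum_Ico_succ_top hik]
    calc |F (p (k+1)) - F (p i)| ≤ |F (p k) - F (p i)| + |F (p (k+1)) - F (p k)| := by
          have := abs_add_le (F (p k) - F (p i)) (F (p (k+1)) - F (p k))
          simpa [sub_add_sub_cancel'] using this
      _ ≤ _ := add_le_add_left ih _

lemma sum_blocks (g : ℕ → ℝ) (k : ℕ → ℕ) :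
    ∀ m : ℕ, (∀ i < m, k i ≤ k (i+1)) →
      (∑ i ∈ Finset.range m, ∑ j ∈ Finset.Ico (k i) (k (i+1)), g j)
        = ∑ j ∈ Finset.Ico (k 0) (k m), g j := by
  intro m
  induction m with
  | zero => simp
  | succ m ih =>
    intro h
    have hmono2 : ∀ i j, i ≤ j → j ≤ m → k i ≤ k j := by
      intro i j hij hjm
      induction j with
      | zero => simp_all
      | succ j ihj =>
        rcases Nat.lt_or_ge i (j+1) with h1 | h1
        · exact le_trans (ihj (by omega) (by omega)) (h j (by omega))
        · have : i = j+1 := by omega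
          simp [this]
    rw [Finset.sum_range_succ, ih (fun i hi => h i (by omega)),
      Finset.sum_Ico_consecutive _ (hmono2 0 m (Nat.zero_le m) le_rfl) (h m (by omega))]

/-- refinement increases variation sums -/
lemma refine_sum (F : ℝ → ℝ) (m M : ℕ) (q r : ℕ → ℝ)
    (hq : ∀ i < m, q i < q (i+1))
    (hr : ∀ k < M, r k ≤ r (k+1))
    (hsub : ∀ i ≤ m, ∃ k ≤ M, r k = q i) :
    (∑ i ∈ Finset.range m, |F (q (i+1)) - F (q i)|)
      ≤ ∑ k ∈ Finset.range M, |F (r (k+1)) - F (r k)| := by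
  classical
  have hex : ∀ i : ℕ, ∃ k : ℕ, i ≤ m → (k ≤ M ∧ r k = q i) := by
    intro i
    by_cases hi : i ≤ m
    · obtain ⟨k, hk1, hk2⟩ := hsub i hi
      exact ⟨k, fun _ => ⟨hk1, hk2⟩⟩
    · exact ⟨0, fun h => absurd h hi⟩
  choose k hk using hex
  have hkmono : ∀ i < m, k i < k (i+1) := by
    intro i hi
    by_contra hc
    push_neg at hc
    have h1 : r (k (i+1)) ≤ r (k i) := chain_le hr (k (i+1)) (k i) hc (hk i (by omega)).1
    rw [(hk i (by omega)).2, (hk (i+1) (by omega)).2] at h1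
    exact absurd h1 (not_le.mpr (hq i hi))
  calc (∑ i ∈ Finset.range m, |F (q (i+1)) - F (q i)|)
      ≤ ∑ i ∈ Finset.range m, ∑ j ∈ Finset.Ico (k i) (k (i+1)), |F (r (j+1)) - F (r j)| := by
        refine Finset.sum_le_sum ?_
        intro i hi
        have him : i < m := Finset.mem_range.mp hi
        rw [← (hk i (by omega)).2, ← (hk (i+1) (by omega)).2]
        exact abs_telescope F r (k i) (k (i+1)) (le_of_lt (hkmono i him))
    _ = ∑ j ∈ Finset.Ico (k 0) (k m), |F (r (j+1)) - F (r j)| :=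
        sum_blocks _ k m (fun i hi => le_of_lt (hkmono i hi))
    _ ≤ ∑ j ∈ Finset.range M, |F (r (j+1)) - F (r j)| := by
        rw [Finset.range_eq_Ico]
        apply Finset.sum_le_sum_of_subset_of_nonneg
        · apply Finset.Ico_subset_Ico (Nat.zero_le _)
          rcases Nat.eq_zero_or_pos m with h0 | h0
          · subst h0; exact (hk 0 (by omega)).1
          · exact (hk m le_rfl).1
        · intro j _ _; exact abs_nonneg _
    
/-- a (possibly non-strict) chain's variation sum lies in `partitionVarSums` -/
lemma mem_PV_of_chain (F : ℝ → ℝ) (a b : ℝ) (hab : a < b) :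
    ∀ m : ℕ, ∀ p : ℕ → ℝ, p 0 = a → p m = b → (∀ j < m, p j ≤ p (j+1)) →
      (∑ j ∈ Finset.range m, |F (p (j+1)) - F (p j)|) ∈ partitionVarSums F a b := by
  intro m
  induction m using Nat.strong_induction_on with
  | _ m ih =>
    intro p hp0 hpm hmono
    rcases Nat.eq_zero_or_pos m with h0 | h0
    · subst h0; rw [hp0] at hpm; exact absurd hpm (ne_of_lt hab)
    by_cases hstrict : ∀ j < m, p j < p (j+1)
    · exact ⟨m, p, h0, hp0, hpm, hstrict, rfl⟩
    · push_neg at hstrict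
      obtain ⟨j0, hj0m, hj0⟩ := hstrict
      have hdeg : p j0 = p (j0+1) := le_antisymm (hmono j0 hj0m) hj0
      have hm1 : 0 < m - 1 ∨ m = 1 := by omega
      set p' : ℕ → ℝ := fun i => if i < j0 then p i else p (i+1) with hp'
      have hp'0 : p' 0 = a := by
        rcases Nat.eq_zero_or_pos j0 with h | h
        · subst h
          show p (0+1) = a
          rw [← hdeg, hp0]
        · show (if 0 < j0 then p 0 else p 1) = a
          rw [if_pos h, hp0]
      have hp'm : p' (m-1) = b := by
        show (if m - 1 < j0 then p (m-1) else p (m-1+1)) = b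
        rw [if_neg (by omega), (by omega : m - 1 + 1 = m), hpm]
      have hmono' : ∀ j < m - 1, p' j ≤ p' (j+1) := by
        intro j hj
        show (if j < j0 then p j else p (j+1)) ≤ (if j+1 < j0 then p (j+1) else p (j+2))
        rcases Nat.lt_or_ge (j+1) j0 with h | h
        · rw [if_pos (by omega), if_pos h]; exact hmono j (by omega)
        · rcases Nat.lt_or_ge j j0 with h2 | h2
          · have hj1 : j + 1 = j0 := by omega
            have e : p (j+2) = p (j+1) := by
              rw [(by omega : j+2 = j0+1), ← hdeg, ← hj1]
            rw [if_pos h2, if_neg (by omega), e]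
            exact hmono j (by omega)
          · rw [if_neg (by omega), if_neg (by omega)]
            exact hmono (j+1) (by omega)
      have hsum : (∑ j ∈ Finset.range (m-1), |F (p' (j+1)) - F (p' j)|)
          = ∑ j ∈ Finset.range m, |F (p (j+1)) - F (p j)| := by
        have hterm : ∀ j, |F (p' (j+1)) - F (p' j)| =
            if j < j0 then |F (p (j+1)) - F (p j)| else |F (p (j+2)) - F (p (j+1))| := by
          intro j
          rcases Nat.lt_or_ge (j+1) j0 with h | h
          · rw [if_pos (by omega)]
            show |F (if j+1 < j0 then p (j+1) else _) - F (if j < j0 then p j else _)| = _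
            rw [if_pos h, if_pos (by omega)]
          · rcases Nat.lt_or_ge j j0 with h2 | h2
            · have he : j + 1 = j0 := by omega
              rw [if_pos h2]
              show |F (if j+1 < j0 then _ else p (j+2)) - F (if j < j0 then p j else _)| = _
              rw [if_neg (by omega), if_pos h2, (by omega : j + 2 = j0 + 1), ← hdeg, ← he]
            · rw [if_neg (by omega)]
              show |F (if j+1 < j0 then _ else p (j+2)) - F (if j < j0 then _ else p (j+1))| = _
              rw [if_neg (by omega), if_neg (by omega)]
        -- split both sums at j0
        have hd : (m - 1) = j0 + (m - 1 - j0) := by omega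
        have hd2 : m = j0 + (m - j0) := by omega
        rw [hd, Finset.sum_range_add]
        conv_rhs => rw [hd2, Finset.sum_range_add]
        congr 1
        · apply Finset.sum_congr rfl
          intro j hj
          have : j < j0 := Finset.mem_range.mp hj
          rw [hterm j, if_pos this]
        · have hmj : m - j0 = (m - 1 - j0) + 1 := by omega
          rw [hmj, Finset.sum_range_succ']
          have : |F (p (j0 + 0 + 1)) - F (p (j0 + 0))| = 0 := by
            simp [hdeg]
          rw [this, add_zero]
          apply Finset.sum_congr rfl
          intro j _
          rw [hterm (j0 + j), if_neg (by omega)]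
          congr 2 <;> omega
      rw [← hsum]
      exact ih (m-1) (by omega) p' hp'0 hp'm hmono'

/-- every point of [a,b] is covered by some interval of a chain -/
lemma chain_cover (p : ℕ → ℝ) (n : ℕ) (hmono : ∀ j < n, p j ≤ p (j+1)) (x : ℝ)
    (hn : 0 < n) (h1 : p 0 ≤ x) (h2 : x ≤ p n) :
    ∃ j < n, p j ≤ x ∧ x ≤ p (j+1) := by
  induction n with
  | zero => omega
  | succ n ih =>
    rcases Nat.eq_zero_or_pos n with h0 | h0
    · subst h0; exact ⟨0, by omega, h1, h2⟩
    · by_cases hx : x ≤ p n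
      · obtain ⟨j, hj, hj1, hj2⟩ := ih (fun j hj => hmono j (by omega)) h0 hx
        exact ⟨j, by omega, hj1, hj2⟩
      · exact ⟨n, by omega, le_of_lt (not_le.mp hx), h2⟩
namespace TaggedDiv
variable {a b : ℝ}

/-- points of the division obtained by splitting each interval at its tag -/
noncomputable def splitPts (D : TaggedDiv a b) : ℕ → ℝ :=
  fun k => if k % 2 = 0 then D.u (k/2) else D.t (k/2)

noncomputable def splitTags (D : TaggedDiv a b) : ℕ → ℝ := fun k => D.t (k/2)

lemma splitPts_even (D : TaggedDiv a b) (j : ℕ) : D.splitPts (2*j) = D.u j := by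
  have h1 : (2*j) % 2 = 0 := by omega
  have h2 : (2*j) / 2 = j := by omega
  simp [splitPts, h1, h2]

lemma splitPts_odd (D : TaggedDiv a b) (j : ℕ) : D.splitPts (2*j+1) = D.t j := by
  have h1 : (2*j+1) % 2 = 1 := by omega
  have h2 : (2*j+1) / 2 = j := by omega
  simp [splitPts, h1, h2]

lemma splitTags_even (D : TaggedDiv a b) (j : ℕ) : D.splitTags (2*j) = D.t j := by
  have h2 : (2*j) / 2 = j := by omega
  simp [splitTags, h2]

lemma splitTags_odd (D : TaggedDiv a b) (j : ℕ) : D.splitTags (2*j+1) = D.t j := by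
  have h2 : (2*j+1) / 2 = j := by omega
  simp [splitTags, h2]

lemma splitPts_zero (D : TaggedDiv a b) : D.splitPts 0 = a := by
  have := D.splitPts_even 0
  simpa [D.left] using this

lemma splitPts_last (D : TaggedDiv a b) : D.splitPts (2*D.n) = b := by
  rw [D.splitPts_even D.n, D.right]

lemma splitPts_mono (D : TaggedDiv a b) : ∀ k < 2*D.n, D.splitPts k ≤ D.splitPts (k+1) := by
  intro k hk
  rcases Nat.even_or_odd k with ⟨j, hj⟩ | ⟨j, hj⟩
  · have hj' : k = 2*j := by omega
    subst hj'
    rw [D.splitPts_even j, D.splitPts_odd j]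
    exact (D.tag_mem j (by omega)).1
  · subst hj
    rw [D.splitPts_odd j, (by ring_nf : 2*j+1+1 = 2*(j+1)), D.splitPts_even (j+1)]
    exact (D.tag_mem j (by omega)).2

lemma splitTags_mem (D : TaggedDiv a b) :
    ∀ k < 2*D.n, D.splitTags k ∈ Set.Icc (D.splitPts k) (D.splitPts (k+1)) := by
  intro k hk
  rcases Nat.even_or_odd k with ⟨j, hj⟩ | ⟨j, hj⟩
  · have hj' : k = 2*j := by omega
    subst hj'
    rw [D.splitTags_even j, D.splitPts_even j, D.splitPts_odd j]
    exact ⟨(D.tag_mem j (by omega)).1, le_rfl⟩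
  · subst hj
    rw [D.splitTags_odd j, D.splitPts_odd j, (by ring_nf : 2*j+1+1 = 2*(j+1)),
      D.splitPts_even (j+1)]
    exact ⟨le_rfl, (D.tag_mem j (by omega)).2⟩

lemma split_icc_subset (D : TaggedDiv a b) :
    ∀ k < 2*D.n, Set.Icc (D.splitPts k) (D.splitPts (k+1)) ⊆
      Set.Icc (D.u (k/2)) (D.u (k/2 + 1)) := by
  intro k hk
  rcases Nat.even_or_odd k with ⟨j, hj⟩ | ⟨j, hj⟩
  · have hj' : k = 2*j := by omega
    subst hj'
    have h2 : (2*j)/2 = j := by omega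
    rw [D.splitPts_even j, D.splitPts_odd j, h2]
    exact Set.Icc_subset_Icc le_rfl (D.tag_mem j (by omega)).2
  · subst hj
    have h2 : (2*j+1)/2 = j := by omega
    rw [D.splitPts_odd j, (by ring_nf : 2*j+1+1 = 2*(j+1)), D.splitPts_even (j+1), h2]
    exact Set.Icc_subset_Icc (D.tag_mem j (by omega)).1 le_rfl

lemma split_fine (D : TaggedDiv a b) (δ : ℝ → ℝ) (hD : D.IsFine δ) :
    ∀ k < 2*D.n, Set.Icc (D.splitPts k) (D.splitPts (k+1)) ⊆
      Set.Ioo (D.splitTags k - δ (D.splitTags k)) (D.splitTags k + δ (D.splitTags k)) := by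
  intro k hk
  have h1 : D.splitTags k = D.t (k/2) := rfl
  have h2 : k/2 < D.n := by omega
  rw [h1]
  exact le_trans (D.split_icc_subset k hk) (hD (k/2) h2)

lemma split_sum (D : TaggedDiv a b) (g : ℝ → ℝ) :
    (∑ k ∈ Finset.range (2*D.n),
      g (D.splitTags k) * (D.splitPts (k+1) - D.splitPts k)) = D.riemannSum g := by
  rw [sum_pair]
  unfold riemannSum
  apply Finset.sum_congr rfl
  intro j _
  rw [D.splitTags_even j, D.splitTags_odd j, D.splitPts_even j, D.splitPts_odd j,
    (by ring_nf : 2*j+1+1 = 2*(j+1)), D.splitPts_even (j+1)]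
  ring

end TaggedDiv
section main
open TaggedDiv

lemma fine_min_left {a b : ℝ} {D : TaggedDiv a b} {δ1 δ2 : ℝ → ℝ}
    (h : D.IsFine (fun x => min (δ1 x) (δ2 x))) : D.IsFine δ1 := by
  intro j hj x hx
  obtain ⟨l, r⟩ := h j hj hx
  exact ⟨by have := min_le_left (δ1 (D.t j)) (δ2 (D.t j)); simp only at l; linarith,
    by have := min_le_left (δ1 (D.t j)) (δ2 (D.t j)); simp only at r; linarith⟩

lemma fine_min_right {a b : ℝ} {D : TaggedDiv a b} {δ1 δ2 : ℝ → ℝ}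
    (h : D.IsFine (fun x => min (δ1 x) (δ2 x))) : D.IsFine δ2 := by
  intro j hj x hx
  obtain ⟨l, r⟩ := h j hj hx
  exact ⟨by have := min_le_right (δ1 (D.t j)) (δ2 (D.t j)); simp only at l; linarith,
    by have := min_le_right (δ1 (D.t j)) (δ2 (D.t j)); simp only at r; linarith⟩

lemma PV_nonempty (F : ℝ → ℝ) (a b : ℝ) (hab : a < b) :
    (partitionVarSums F a b).Nonempty := by
  refine ⟨|F b - F a|, 1, fun j => if j = 0 then a else b, one_pos, by simp, by simp, ?_, by simp⟩
  intro j hj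
  interval_cases j
  simpa using hab

/-- the key split estimate -/
lemma split_abs_est {a b : ℝ} (hab : a < b) (f F : ℝ → ℝ) (hFa : F a = 0)
    (hF : ∀ x : ℝ, a < x → x ≤ b → HKIntegral a x f (F x))
    (δ1 : ℝ → ℝ) (hδ1 : IsGauge a b δ1) (ε' : ℝ) (hε' : 0 ≤ ε')
    (hbound : ∀ D : TaggedDiv a b, D.IsFine δ1 → |D.riemannSum f - F b| ≤ ε')
    (D : TaggedDiv a b) (hD : D.IsFine δ1) :
    abs (D.riemannSum (fun x => |f x|)
      - ∑ k ∈ Finset.range (2*D.n), |F (D.splitPts (k+1)) - F (D.splitPts k)|) ≤ 2*ε' := by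
  have hhen := henstock hab f F hFa hF δ1 hδ1 ε' hε' hbound (2*D.n) D.splitPts D.splitTags
    D.splitPts_zero D.splitPts_last D.splitPts_mono D.splitTags_mem (D.split_fine δ1 hD)
  rw [← split_sum D (fun x => |f x|), ← Finset.sum_sub_distrib]
  refine le_trans (Finset.abs_sum_le_sum_abs _ _) (le_trans (Finset.sum_le_sum ?_) hhen)
  intro k hk
  have hk' := Finset.mem_range.mp hk
  have hΔ : 0 ≤ D.splitPts (k+1) - D.splitPts k := by
    have := D.splitPts_mono k hk'; linarith
  calc abs (|f (D.splitTags k)| * (D.splitPts (k+1) - D.splitPts k)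
        - |F (D.splitPts (k+1)) - F (D.splitPts k)|)
      = abs (|f (D.splitTags k) * (D.splitPts (k+1) - D.splitPts k)|
        - |F (D.splitPts (k+1)) - F (D.splitPts k)|) := by
        rw [abs_mul, abs_of_nonneg hΔ]
    _ ≤ |f (D.splitTags k) * (D.splitPts (k+1) - D.splitPts k)
        - (F (D.splitPts (k+1)) - F (D.splitPts k))| := abs_abs_sub_abs_le_abs_sub _ _

/-- any existing integral of |f| is an upper bound of the variation sums -/
lemma integral_upperBound {a b : ℝ} (hab : a < b) (f F : ℝ → ℝ) (hFa : F a = 0)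
    (hF : ∀ x : ℝ, a < x → x ≤ b → HKIntegral a x f (F x)) (T : ℝ)
    (hT : HKIntegral a b (fun x => |f x|) T) :
    T ∈ upperBounds (partitionVarSums F a b) := by
  rintro v ⟨n, u, hn, hu0, hun, hmono, rfl⟩
  have hmono' : ∀ i < n, u i ≤ u (i+1) := fun i hi => (hmono i hi).le
  refine le_of_forall_pos_le_add ?_
  intro ε hε
  obtain ⟨δ0, hδ0, hB0⟩ := hT (ε/2) (by linarith)
  have hnR : (0:ℝ) < n := Nat.cast_pos.mpr hn
  set η := ε/(2*n) with hη'
  have hη : 0 < η := by positivity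
  have hex : ∀ j, ∃ Sj : ℝ, j < n →
      ((∃ Dj : TaggedDiv (u j) (u (j+1)), Dj.IsFine δ0 ∧
        Dj.riemannSum (fun x => |f x|) = Sj) ∧ |F (u (j+1)) - F (u j)| ≤ Sj + η) := by
    intro j
    by_cases hj : j < n
    · have hauj : a ≤ u j := by
        rw [← hu0]; exact chain_le hmono' 0 j (Nat.zero_le j) (by omega)
      have hujb : u (j+1) ≤ b := by
        rw [← hun]; exact chain_le hmono' (j+1) n (by omega) le_rfl
      obtain ⟨δj, hδj, hBj⟩ :=
        hk_sub hab f F hFa hF (u j) (u (j+1)) hauj (hmono j hj) hujb η hη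
      have hg : IsGauge (u j) (u (j+1)) (fun x => min (δ0 x) (δj x)) := fun x hx =>
        lt_min (hδ0 x ⟨le_trans hauj hx.1, le_trans hx.2 hujb⟩) (hδj x hx)
      obtain ⟨Dj, hDj⟩ := cousin _ _ (hmono j hj) _ hg
      have hfine0 : Dj.IsFine δ0 := fine_min_left hDj
      have hfinej : Dj.IsFine δj := fine_min_right hDj
      have hb := hBj Dj hfinej
      refine ⟨Dj.riemannSum (fun x => |f x|), fun _ => ⟨⟨Dj, hfine0, rfl⟩, ?_⟩⟩
      have h1 : |Dj.riemannSum f| ≤ Dj.riemannSum (fun x => |f x|) := abs_riemannSum_le Dj f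
      have h2 : |F (u (j+1)) - F (u j)| ≤ |Dj.riemannSum f|
          + |Dj.riemannSum f - (F (u (j+1)) - F (u j))| := by
        have := abs_sub (Dj.riemannSum f) (Dj.riemannSum f - (F (u (j+1)) - F (u j)))
        simpa using this
      linarith
    · exact ⟨0, fun h => absurd h hj⟩
  choose S hS using hex
  have h0n : u 0 < u n := by rw [hu0, hun]; exact hab
  obtain ⟨D0, hD0fine, hD0sum⟩ := glue (fun x => |f x|) δ0 n u S hmono' h0n
    (fun j hj => Or.inr (hS j hj).1)
  set D : TaggedDiv a b := castRight hun (castLeft hu0 D0) with hDdef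
  have hDfine : D.IsFine δ0 := castRight_fine _ _ _ (castLeft_fine _ _ _ hD0fine)
  have hDsum : D.riemannSum (fun x => |f x|) = ∑ j ∈ Finset.range n, S j := by
    rw [hDdef, castRight_sum, castLeft_sum, hD0sum]
  have hB := hB0 D hDfine
  have hcount : (∑ j ∈ Finset.range n, (S j + η)) = (∑ j ∈ Finset.range n, S j) + n * η := by
    rw [Finset.sum_add_distrib, Finset.sum_const, Finset.card_range, nsmul_eq_mul]
  have hnη : (n:ℝ) * η = ε/2 := by
    rw [hη']; field_simp
  calc (∑ j ∈ Finset.range n, |F (u (j+1)) - F (u j)|)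
      ≤ ∑ j ∈ Finset.range n, (S j + η) :=
        Finset.sum_le_sum (fun j hj => (hS j (Finset.mem_range.mp hj)).2)
    _ = D.riemannSum (fun x => |f x|) + ε/2 := by rw [hcount, hDsum, hnη]
    _ ≤ T + ε := by
        have := (abs_lt.mp hB).2
        linarith

/-- any existing integral of |f| is at most any upper bound of the variation sums -/
lemma integral_le_ub {a b : ℝ} (hab : a < b) (f F : ℝ → ℝ) (hFa : F a = 0)
    (hF : ∀ x : ℝ, a < x → x ≤ b → HKIntegral a x f (F x)) (T : ℝ)
    (hT : HKIntegral a b (fun x => |f x|) T) (c : ℝ)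
    (hc : c ∈ upperBounds (partitionVarSums F a b)) : T ≤ c := by
  refine le_of_forall_pos_le_add ?_
  intro ε hε
  obtain ⟨δ0, hδ0, hB0⟩ := hT (ε/2) (by linarith)
  obtain ⟨δ1, hδ1, hB1⟩ := hF b hab le_rfl (ε/8) (by linarith)
  have hbound : ∀ D : TaggedDiv a b, D.IsFine δ1 → |D.riemannSum f - F b| ≤ ε/8 :=
    fun D hD => (hB1 D hD).le
  have hδ : IsGauge a b (fun x => min (δ0 x) (δ1 x)) := fun x hx =>
    lt_min (hδ0 x hx) (hδ1 x hx)
  obtain ⟨D, hD⟩ := cousin a b hab _ hδ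
  have hD0 : D.IsFine δ0 := fine_min_left hD
  have hD1 : D.IsFine δ1 := fine_min_right hD
  have hest := split_abs_est hab f F hFa hF δ1 hδ1 (ε/8) (by linarith) hbound D hD1
  have hPV : (∑ k ∈ Finset.range (2*D.n), |F (D.splitPts (k+1)) - F (D.splitPts k)|)
      ∈ partitionVarSums F a b :=
    mem_PV_of_chain F a b hab (2*D.n) D.splitPts D.splitPts_zero D.splitPts_last
      D.splitPts_mono
  have hcle := hc hPV
  have hB := (abs_lt.mp (hB0 D hD0)).1
  have hestle := (abs_le.mp hest).2
  linarith

/-- bounded variation implies |f| is integrable with integral sSup -/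
lemma bdd_integral {a b : ℝ} (hab : a < b) (f F : ℝ → ℝ) (hFa : F a = 0)
    (hF : ∀ x : ℝ, a < x → x ≤ b → HKIntegral a x f (F x))
    (hbdd : BddAbove (partitionVarSums F a b)) :
    HKIntegral a b (fun x => |f x|) (sSup (partitionVarSums F a b)) := by
  classical
  intro ε hε
  set V := sSup (partitionVarSums F a b) with hV
  obtain ⟨v0, hv0PV, hv0⟩ := exists_lt_of_lt_csSup (PV_nonempty F a b hab)
    (by linarith : V - ε/4 < V)
  obtain ⟨m, q, hm, hq0, hqm, hqmono, hv0eq⟩ := hv0PV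
  have hqmono' : ∀ i < m, q i ≤ q (i+1) := fun i hi => (hqmono i hi).le
  obtain ⟨δ1, hδ1, hB1⟩ := hF b hab le_rfl (ε/8) (by linarith)
  have hbound : ∀ D : TaggedDiv a b, D.IsFine δ1 → |D.riemannSum f - F b| ≤ ε/8 :=
    fun D hD => (hB1 D hD).le
  set Qf : Finset ℝ := (Finset.range (m+1)).image q with hQf
  have hQmem : ∀ i ≤ m, q i ∈ Qf := by
    intro i hi
    exact Finset.mem_image.mpr ⟨i, Finset.mem_range.mpr (by omega), rfl⟩
  have hQx : ∀ x : ℝ, (Qf.filter (fun y => y ≠ x)).Nonempty := by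
    intro x
    rcases ne_or_eq a x with h | h
    · exact ⟨a, Finset.mem_filter.mpr ⟨hq0 ▸ hQmem 0 (Nat.zero_le m), h⟩⟩
    · refine ⟨b, Finset.mem_filter.mpr ⟨hqm ▸ hQmem m le_rfl, ?_⟩⟩
      rw [← h]; exact (ne_of_lt hab).symm
  set d : ℝ → ℝ := fun x =>
    ((Qf.filter (fun y => y ≠ x)).image (fun y => |x - y|)).min'
      (Finset.Nonempty.image (hQx x) (fun y => |x - y|)) with hd
  have hdpos : ∀ x, 0 < d x := by
    intro x
    obtain ⟨y, hy, hyeq⟩ := Finset.mem_image.mp (Finset.min'_mem _ (Finset.Nonempty.image (hQx x) (fun y => |x - y|)))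
    rw [hd]
    simp only
    rw [← hyeq]
    have : y ≠ x := (Finset.mem_filter.mp hy).2
    rw [abs_pos, sub_ne_zero]
    exact (this).symm
  have hdle : ∀ x y, y ∈ Qf → y ≠ x → d x ≤ |x - y| := by
    intro x y hy hyx
    apply Finset.min'_le
    exact Finset.mem_image.mpr ⟨y, Finset.mem_filter.mpr ⟨hy, hyx⟩, rfl⟩
  have hδ : IsGauge a b (fun x => min (δ1 x) (d x)) := fun x hx =>
    lt_min (hδ1 x hx) (hdpos x)
  refine ⟨_, hδ, ?_⟩
  intro D hD
  have hD1 : D.IsFine δ1 := fine_min_left hD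
  have hest := split_abs_est hab f F hFa hF δ1 hδ1 (ε/8) (by linarith) hbound D hD1
  set Sr := ∑ k ∈ Finset.range (2*D.n), |F (D.splitPts (k+1)) - F (D.splitPts k)| with hSr
  have hup : Sr ≤ V := le_csSup hbdd
    (mem_PV_of_chain F a b hab (2*D.n) D.splitPts D.splitPts_zero D.splitPts_last
      D.splitPts_mono)
  have hsub : ∀ i ≤ m, ∃ k ≤ 2*D.n, D.splitPts k = q i := by
    intro i hi
    have hqa : a ≤ q i := by rw [← hq0]; exact chain_le hqmono' 0 i (Nat.zero_le i) hi
    have hqb : q i ≤ b := by rw [← hqm]; exact chain_le hqmono' i m hi le_rfl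
    obtain ⟨j, hj, h1, h2⟩ := chain_cover D.u D.n (fun j hj => (D.mono j hj).le) (q i)
      D.n_pos (by rw [D.left]; exact hqa) (by rw [D.right]; exact hqb)
    rcases eq_or_lt_of_le h1 with he | hlt1
    · exact ⟨2*j, by omega, by rw [D.splitPts_even]; exact he⟩
    rcases eq_or_lt_of_le h2 with he | hlt2
    · exact ⟨2*(j+1), by omega, by rw [D.splitPts_even]; exact he.symm⟩
    have hmemIoo := hD j hj ⟨h1, h2⟩
    have : q i = D.t j := by
      by_contra hne'
      have hle := hdle (D.t j) (q i) (hQmem i hi) hne'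
      obtain ⟨l, r⟩ := hmemIoo
      simp only at l r
      have habs : |D.t j - q i| < min (δ1 (D.t j)) (d (D.t j)) := by
        rw [abs_sub_comm, abs_lt]
        constructor <;> linarith
      have := lt_of_lt_of_le habs (min_le_right _ _)
      linarith [this, hle]
    exact ⟨2*j+1, by omega, by rw [D.splitPts_odd]; exact this.symm⟩
  have hlow : v0 ≤ Sr := by
    rw [hv0eq, hSr]
    exact refine_sum F m (2*D.n) q D.splitPts hqmono D.splitPts_mono hsub
  have hel := abs_le.mp hest
  rw [abs_lt]
  constructor
  · have := hel.2; linarith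
  · have := hel.1; linarith
end main

/-- **Theorem 3.1.12, (3.1.21).** For `f` gauge integrable over `[a,b]` with indefinite
integral `F`, `|f|` is gauge integrable over `[a,b]` iff `F` is of bounded variation over
`[a,b]`, and then the integral of `|f|` equals the total variation of `F`. -/
theorem abs_hkIntegrable_iff_bddVariation (a b : ℝ) (hab : a < b) (f F : ℝ → ℝ)
    (hFa : F a = 0) (hF : ∀ x : ℝ, a < x → x ≤ b → HKIntegral a x f (F x)) :
    ((∃ T : ℝ, HKIntegral a b (fun x => |f x|) T) ↔ BddAbove (partitionVarSums F a b)) ∧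
    (∀ T : ℝ, HKIntegral a b (fun x => |f x|) T → T = sSup (partitionVarSums F a b)) := by
  constructor
  · constructor
    · rintro ⟨T, hT⟩
      exact ⟨T, integral_upperBound hab f F hFa hF T hT⟩
    · intro hbdd
      exact ⟨_, bdd_integral hab f F hFa hF hbdd⟩
  · intro T hT
    have hlub : IsLUB (partitionVarSums F a b) T :=
      ⟨integral_upperBound hab f F hFa hF T hT,
        fun c hc => integral_le_ub hab f F hFa hF T hT c hc⟩
    exact (hlub.csSup_eq (PV_nonempty F a b hab)).symm
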